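/- arXiv:2310.00600 — 5 statements merged into one kernel-verified Lean document; each statement's English description precedes it below -/
import Mathlib

section
/- Let G be a finite simple graph. The adjacency matrix of G has at most two distinct eigenvalues if and only if G is a disjoint union of cliques all of the same size. -/
open Matrix

private lemma pairSubset_of_ncard_le_two {S : Set ℝ} (hfin : S.Finite) (h : S.ncard ≤ 2) :
    ∃ a b : ℝ, S ⊆ {a, b} := by
  rcases S.eq_empty_or_nonempty with hS | ⟨a, ha⟩
  · exact ⟨0, 0, by simp [hS]⟩
  by_cases hsub : S ⊆ {a}
  · exact ⟨a, a, by simpa using hsub⟩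
  · obtain ⟨b, hb, hba⟩ : ∃ b ∈ S, b ≠ a := by
      by_contra hc; push_neg at hc
      exact hsub fun x hx => hc x hx
    refine ⟨a, b, fun c hc => ?_⟩
    by_contra hcn
    simp only [Set.mem_insert_iff, Set.mem_singleton_iff, not_or] at hcn
    have h3 : ({c, a, b} : Set ℝ).ncard = 3 := by
      rw [Set.ncard_insert_of_notMem (by simp [hcn.1, hcn.2])
        ((Set.finite_singleton b).insert a), Set.ncard_pair (Ne.symm hba)]
    have hle : ({c, a, b} : Set ℝ).ncard ≤ S.ncard := by
      apply Set.ncard_le_ncard _ hfin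
      intro x hx
      rcases hx with rfl | rfl | rfl
      · exact hc
      · exact ha
      · exact hb
    omega

private lemma annihilate_of_ncard_le_two {n : Type*} [Fintype n] [DecidableEq n]
    {A : Matrix n n ℝ} (hA : A.IsHermitian) (h : (spectrum ℝ A).ncard ≤ 2) :
    ∃ a b : ℝ, (A - a•1) * (A - b•1) = 0 := by
  cases isEmpty_or_nonempty n with
  | inl he => exact ⟨0, 0, Subsingleton.elim _ _⟩
  | inr hne =>
    obtain ⟨a, b, hsub⟩ := pairSubset_of_ncard_le_two (A.finite_spectrum) h
    refine ⟨a, b, ?_⟩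
    have hf : ∀ i, hA.eigenvalues i = a ∨ hA.eigenvalues i = b := fun i => by
      have := hsub (hA.eigenvalues_mem_spectrum_real i)
      simpa using this
    set U : Matrix n n ℝ := (hA.eigenvectorUnitary : Matrix n n ℝ) with hU
    set D : Matrix n n ℝ := diagonal (RCLike.ofReal ∘ hA.eigenvalues) with hD
    have hU1 : U * star U = 1 := (Matrix.mem_unitaryGroup_iff).mp (hA.eigenvectorUnitary).2
    have hU2 : star U * U = 1 := (Matrix.mem_unitaryGroup_iff').mp (hA.eigenvectorUnitary).2
    have hkey : ∀ c : ℝ, A - c•1 = U * (D - c•1) * star U := by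
      intro c
      rw [mul_sub, sub_mul, mul_smul_comm, smul_mul_assoc, mul_one, hU1, hD, hU]
      exact congrArg (· - c • 1) hA.spectral_theorem
    have hDD : (D - a•1) * (D - b•1) = 0 := by
      have h1 : ∀ c : ℝ, D - c•1 = diagonal (fun i => hA.eigenvalues i - c) := by
        intro c
        ext i j
        rcases eq_or_ne i j with rfl | hij
        · simp [hD, RCLike.ofReal_real_eq_id]
        · simp [hD, diagonal_apply_ne _ hij, one_apply_ne hij]
      rw [h1, h1, diagonal_mul_diagonal]
      have : (fun i => (hA.eigenvalues i - a) * (hA.eigenvalues i - b)) = fun _ => 0 := by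
        funext i
        rcases hf i with h' | h' <;> rw [h'] <;> ring
      rw [this, diagonal_zero]
    rw [hkey a, hkey b]
    simp only [mul_assoc]
    rw [← mul_assoc (star U) U, hU2, one_mul, ← mul_assoc (D - a•1), hDD, zero_mul, mul_zero]

private lemma spectrum_subset_pair {n : Type*} [Fintype n] [DecidableEq n] (A : Matrix n n ℝ)
    (r t : ℝ) (h : (A - r•1) * (A - t•1) = 0) : spectrum ℝ A ⊆ {r, t} := by
  intro μ hμ
  by_contra hne
  simp only [Set.mem_insert_iff, Set.mem_singleton_iff, not_or] at hne
  rw [spectrum.mem_iff] at hμ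
  apply hμ
  have key : (μ•1 - A) * (A - (r + t - μ)•1) = ((μ - r)*(μ - t)) • (1 : Matrix n n ℝ) := by
    have hA2 : A*A = (r+t)•A - (r*t)•(1 : Matrix n n ℝ) := by
      have expand : (A - r•1)*(A - t•1) = A*A - (r+t)•A + (r*t)•(1 : Matrix n n ℝ) := by
        simp only [sub_mul, mul_sub, smul_mul_assoc, mul_smul_comm, one_mul, mul_one, smul_smul,
          smul_sub, add_smul]
        module
      rw [expand] at h
      linear_combination (norm := module) h
    simp only [sub_mul, mul_sub, smul_mul_assoc, mul_smul_comm, one_mul, mul_one, smul_smul,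
      smul_sub, hA2]
    match_scalars <;> ring
  have hc : (μ - r)*(μ - t) ≠ 0 :=
    mul_ne_zero (sub_ne_zero.mpr hne.1) (sub_ne_zero.mpr hne.2)
  have comm : (A - (r + t - μ)•1) * (μ•1 - A) = (μ•1 - A) * (A - (r + t - μ)•1) := by
    simp only [sub_mul, mul_sub, smul_mul_assoc, mul_smul_comm, one_mul, mul_one, smul_smul,
      smul_sub]
    module
  rw [Algebra.algebraMap_eq_smul_one]
  refine isUnit_iff_exists.mpr ⟨((μ - r)*(μ - t))⁻¹ • (A - (r + t - μ)•1), ?_, ?_⟩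
  · rw [mul_smul_comm, key, smul_smul, inv_mul_cancel₀ hc, one_smul]
  · rw [smul_mul_assoc, comm, key, smul_smul, inv_mul_cancel₀ hc, one_smul]

private lemma adjMatrix_isHermitian {V : Type*} [Fintype V] (G : SimpleGraph V)
    [DecidableRel G.Adj] : (G.adjMatrix ℝ).IsHermitian := by
  ext i j
  simp [Matrix.conjTranspose_apply, SimpleGraph.adjMatrix_apply, SimpleGraph.adj_comm]

private lemma adjMatrix_mul_apply_card {V : Type*} [Fintype V] [DecidableEq V]
    (G : SimpleGraph V) [DecidableRel G.Adj] (u v : V) :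
    (G.adjMatrix ℝ * G.adjMatrix ℝ) u v
      = ((G.neighborFinset u).filter (fun w => G.Adj w v)).card := by
  rw [SimpleGraph.adjMatrix_mul_apply]
  simp [SimpleGraph.adjMatrix_apply, Finset.sum_boole]

theorem stmt_0 {V : Type*} [Fintype V] [DecidableEq V] (G : SimpleGraph V)
    [DecidableRel G.Adj] :
    (spectrum ℝ (G.adjMatrix ℝ)).ncard ≤ 2 ↔
      ((∀ u v : V, u ≠ v → G.Reachable u v → G.Adj u v) ∧
        ∃ s : ℕ, ∀ v : V, {u : V | G.Reachable v u}.ncard = s) := by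
  constructor
  · intro h
    obtain ⟨a, b, hq⟩ := annihilate_of_ncard_le_two (adjMatrix_isHermitian G) h
    have hA2 : (G.adjMatrix ℝ) * (G.adjMatrix ℝ)
        = (a+b)•(G.adjMatrix ℝ) - (a*b)•(1 : Matrix V V ℝ) := by
      have expand : ((G.adjMatrix ℝ) - a•1)*((G.adjMatrix ℝ) - b•1)
          = (G.adjMatrix ℝ)*(G.adjMatrix ℝ) - (a+b)•(G.adjMatrix ℝ)
            + (a*b)•(1 : Matrix V V ℝ) := by
        simp only [sub_mul, mul_sub, smul_mul_assoc, mul_smul_comm, one_mul, mul_one, smul_smul,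
          smul_sub, add_smul]
        module
      rw [expand] at hq
      linear_combination (norm := module) hq
    -- transitivity step
    have step : ∀ u w v : V, u ≠ v → G.Adj u w → G.Adj w v → G.Adj u v := by
      intro u w v huv h1 h2
      by_contra hnadj
      have e1 : ((G.adjMatrix ℝ) * (G.adjMatrix ℝ)) u v = 0 := by
        rw [hA2, Matrix.sub_apply, Matrix.smul_apply, Matrix.smul_apply,
          Matrix.one_apply_ne huv]
        have h0 : (G.adjMatrix ℝ) u v = 0 := by simp [hnadj]
        rw [h0]
        simp
      rw [adjMatrix_mul_apply_card] at e1
      have hmem : w ∈ (G.neighborFinset u).filter (fun x => G.Adj x v) := by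
        simp [SimpleGraph.mem_neighborFinset, h1, h2]
      have : ((G.neighborFinset u).filter (fun x => G.Adj x v)).card ≠ 0 :=
        Finset.card_ne_zero_of_mem hmem
      exact this (by exact_mod_cast e1)
    have htrans : ∀ u v : V, u ≠ v → G.Reachable u v → G.Adj u v := by
      intro u v huv hr
      obtain ⟨p⟩ := hr
      induction p with
      | nil => exact absurd rfl huv
      | @cons x y z h1 p ih =>
        rcases eq_or_ne y z with rfl | hyz
        · exact h1
        · exact step _ _ _ huv h1 (ih hyz)
    refine ⟨htrans, ?_⟩
    -- regularity
    have hreg : ∀ u v : V, G.degree u = G.degree v := by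
      have hdeg : ∀ v : V, (G.degree v : ℝ) = -(a*b) := by
        intro v
        have e1 : ((G.adjMatrix ℝ) * (G.adjMatrix ℝ)) v v = -(a*b) := by
          rw [hA2, Matrix.sub_apply, Matrix.smul_apply, Matrix.smul_apply,
            Matrix.one_apply_eq]
          have h0 : (G.adjMatrix ℝ) v v = 0 := by simp
          rw [h0]
          simp
        rw [SimpleGraph.adjMatrix_mul_self_apply_self] at e1
        exact e1
      intro u v
      have : (G.degree u : ℝ) = (G.degree v : ℝ) := by rw [hdeg u, hdeg v]
      exact_mod_cast this
    cases isEmpty_or_nonempty V with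
    | inl he => exact ⟨0, fun v => isEmptyElim v⟩
    | inr hne =>
      obtain ⟨v₀⟩ := hne
      refine ⟨G.degree v₀ + 1, fun v => ?_⟩
      have hset : {u : V | G.Reachable v u} = insert v (G.neighborSet v) := by
        ext u
        simp only [Set.mem_setOf_eq, Set.mem_insert_iff, SimpleGraph.mem_neighborSet]
        constructor
        · intro hr
          rcases eq_or_ne u v with rfl | huv
          · exact Or.inl rfl
          · exact Or.inr (htrans v u (Ne.symm huv) hr)
        · rintro (rfl | hadj)
          · exact SimpleGraph.Reachable.refl _
          · exact hadj.reachable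
      rw [hset, Set.ncard_insert_of_notMem (by simp) (Set.toFinite _)]
      have : (G.neighborSet v).ncard = G.degree v := by
        rw [← Nat.card_coe_set_eq, Nat.card_eq_fintype_card,
          G.card_neighborSet_eq_degree]
      rw [this, hreg v v₀]
  · rintro ⟨htrans, s, hs⟩
    cases isEmpty_or_nonempty V with
    | inl he =>
      have : spectrum ℝ (G.adjMatrix ℝ) = ∅ := by
        ext μ
        simp only [Set.mem_empty_iff_false, iff_false, spectrum.mem_iff, not_not]
        exact isUnit_of_subsingleton _
      simp [this]
    | inr hne =>
      -- basic facts about reachability sets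
      have hmemR : ∀ v : V, v ∈ {u : V | G.Reachable v u} := fun v => SimpleGraph.Reachable.refl v
      have hs1 : 1 ≤ s := by
        obtain ⟨v₀⟩ := hne
        have hpos := (Set.ncard_pos (Set.toFinite _)).mpr ⟨v₀, hmemR v₀⟩
        rw [hs v₀] at hpos
        omega
      -- degree computation
      have hdeg : ∀ v : V, G.degree v = s - 1 := by
        intro v
        have hset : (G.neighborSet v) = {u : V | G.Reachable v u} \ {v} := by
          ext u
          simp only [SimpleGraph.mem_neighborSet, Set.mem_diff, Set.mem_setOf_eq,
            Set.mem_singleton_iff]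
          constructor
          · intro hadj
            exact ⟨hadj.reachable, fun h => G.irrefl (h ▸ hadj)⟩
          · rintro ⟨hr, hne'⟩
            exact htrans v u (fun h => hne' h.symm) hr
        have : (G.neighborSet v).ncard = s - 1 := by
          rw [hset, Set.ncard_diff_singleton_of_mem (hmemR v), hs v]
        rw [← this, ← Nat.card_coe_set_eq, Nat.card_eq_fintype_card,
          G.card_neighborSet_eq_degree]
      -- the quadratic identity
      have hkey : ((G.adjMatrix ℝ) - ((s:ℝ) - 1)•1) * ((G.adjMatrix ℝ) - (-1:ℝ)•1) = 0 := by
        have hA2 : (G.adjMatrix ℝ)*(G.adjMatrix ℝ)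
            = ((s:ℝ) - 2)•(G.adjMatrix ℝ) + ((s:ℝ) - 1)•(1 : Matrix V V ℝ) := by
          ext u v
          rcases eq_or_ne u v with rfl | huv
          · rw [SimpleGraph.adjMatrix_mul_self_apply_self, Matrix.add_apply, Matrix.smul_apply,
              Matrix.smul_apply, Matrix.one_apply_eq]
            have h0 : (G.adjMatrix ℝ) u u = 0 := by simp
            rw [h0, hdeg u, Nat.cast_sub hs1]
            simp
          · rw [adjMatrix_mul_apply_card, Matrix.add_apply, Matrix.smul_apply,
              Matrix.smul_apply, Matrix.one_apply_ne huv]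
            by_cases hadj : G.Adj u v
            · have h1 : (G.adjMatrix ℝ) u v = 1 := by simp [hadj]
              rw [h1]
              have hset : (((G.neighborFinset u).filter (fun w => G.Adj w v)) : Set V)
                  = {w : V | G.Reachable u w} \ {u, v} := by
                ext w
                simp only [Finset.coe_filter, SimpleGraph.mem_neighborFinset, Set.mem_setOf_eq,
                  Set.mem_diff, Set.mem_insert_iff, Set.mem_singleton_iff, not_or]
                constructor
                · rintro ⟨h1, h2⟩
                  exact ⟨h1.reachable, fun h => G.irrefl (h ▸ h1), fun h => G.irrefl (h ▸ h2)⟩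
                · rintro ⟨hr, hwu, hwv⟩
                  refine ⟨htrans u w (fun h => hwu h.symm) hr, ?_⟩
                  have hrv : G.Reachable v w := (hadj.symm.reachable).trans hr
                  exact (htrans v w (fun h => hwv h.symm) hrv).symm
              have hsub2 : ({u, v} : Set V) ⊆ {w : V | G.Reachable u w} := by
                intro x hx
                rcases hx with rfl | rfl
                · exact hmemR _
                · exact hadj.reachable
              have hs2 : 2 ≤ s := by
                rw [← hs u, ← Set.ncard_pair huv]
                exact Set.ncard_le_ncard hsub2 (Set.toFinite _)
              have hcard : (((G.neighborFinset u).filter (fun w => G.Adj w v))).card = s - 2 := by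
                rw [← Set.ncard_coe_finset, hset,
                  Set.ncard_diff hsub2 (Set.toFinite _), hs u, Set.ncard_pair huv]
              rw [hcard, Nat.cast_sub hs2]
              norm_num
            · have h1 : (G.adjMatrix ℝ) u v = 0 := by simp [hadj]
              rw [h1]
              have hemp : ((G.neighborFinset u).filter (fun w => G.Adj w v)) = ∅ := by
                rw [Finset.filter_eq_empty_iff]
                intro w hw
                rw [SimpleGraph.mem_neighborFinset] at hw
                intro hwv
                exact hadj (htrans u v huv (hw.reachable.trans hwv.reachable))
              rw [hemp]
              simp
        simp only [sub_mul, mul_sub, smul_mul_assoc, mul_smul_comm, one_mul, mul_one, smul_smul,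
          smul_sub, hA2]
        match_scalars <;> ring
      have hsub := spectrum_subset_pair (G.adjMatrix ℝ) _ _ hkey
      calc (spectrum ℝ (G.adjMatrix ℝ)).ncard ≤ ({(s:ℝ) - 1, (-1:ℝ)} : Set ℝ).ncard :=
            Set.ncard_le_ncard hsub (Set.toFinite _)
        _ ≤ 2 := by
            apply le_trans (Set.ncard_insert_le _ _)
            simp
end

section
/- Let A be a real symmetric n×n matrix and B a principal submatrix of A of size (n-1)×(n-1). Then the eigenvalues of B interlace those of A: if μ_1 ≥ ... ≥ μ_n are the eigenvalues of A and σ_1 ≥ ... ≥ σ_{n-1} those of B, then μ_i ≥ σ_i ≥ μ_{i+1} for all 1 ≤ i ≤ n-1. -/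
open Polynomial Matrix Finset

local notation "⟪" x ", " y "⟫" => @inner ℝ _ _ x y

lemma my_charpoly_diag {m : ℕ} (d : Fin m → ℝ) :
    (Matrix.diagonal d).charpoly = ∏ i, (X - C (d i)) := by
  rw [Matrix.charpoly, Matrix.charmatrix, RingHom.mapMatrix_apply, Matrix.scalar_apply,
    Matrix.diagonal_map (map_zero C), Matrix.diagonal_sub, Matrix.det_diagonal]

lemma my_charpoly_eq {m : ℕ} (M : Matrix (Fin m) (Fin m) ℝ) (hM : M.IsHermitian) :
    M.charpoly = ∏ i, (X - C (hM.eigenvalues i)) := by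
  simpa using hM.charpoly_eq

lemma my_roots_prod {m : ℕ} (g : Fin m → ℝ) :
    (∏ i, (X - C (g i))).roots = Finset.univ.val.map g := by
  have : ∏ i, (X - C (g i)) = (Multiset.map (fun a => X - C a) (Finset.univ.val.map g)).prod := by
    rw [Multiset.map_map]
    rfl
  rw [this, Polynomial.roots_multiset_prod_X_sub_C]

lemma my_ms_eq {m : ℕ} (e μ : Fin m → ℝ)
    (h : (∏ i, (X - C (e i))) = ∏ i, (X - C (μ i))) :
    Finset.univ.val.map e = Finset.univ.val.map μ := by
  have := congrArg Polynomial.roots h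
  rwa [my_roots_prod, my_roots_prod] at this

lemma my_count_eq {m : ℕ} (e μ : Fin m → ℝ)
    (h : Finset.univ.val.map e = Finset.univ.val.map μ)
    (p : ℝ → Prop) [DecidablePred p] :
    (Finset.univ.filter (fun j => p (e j))).card
      = (Finset.univ.filter (fun j => p (μ j))).card := by
  have := congrArg (Multiset.countP p) h
  rwa [Multiset.countP_map, Multiset.countP_map] at this


lemma my_orth_inner {m : ℕ} {ι : Type*} [Fintype ι] (v : ι → EuclideanSpace ℝ (Fin m))
    (hv : Orthonormal ℝ v) (c d : ι → ℝ) :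
    ⟪∑ i, c i • v i, ∑ j, d j • v j⟫ = ∑ i, c i * d i := by
  classical
  rw [sum_inner]
  simp_rw [inner_sum, real_inner_smul_left, real_inner_smul_right]
  rw [orthonormal_iff_ite] at hv
  simp [hv, mul_ite, mul_one, mul_zero, Finset.sum_ite_eq, Finset.mem_univ]

noncomputable def myLift {m : ℕ} (k : Fin (m + 1)) :
    EuclideanSpace ℝ (Fin m) →ₗ[ℝ] EuclideanSpace ℝ (Fin (m + 1)) where
  toFun x := WithLp.toLp 2 (Fin.insertNth (α := fun _ => ℝ) k 0 (WithLp.ofLp x))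
  map_add' x y := by
    have h := Fin.insertNth_add (α := fun _ => ℝ) k 0 0 x y
    simp only [add_zero] at h
    rw [WithLp.ofLp_add, h, WithLp.toLp_add]
  map_smul' c x := by
    simp only [RingHom.id_apply]
    ext j
    refine Fin.succAboveCases k ?_ ?_ j
    · simp
    · intro i
      simp

lemma myLift_apply_same {m : ℕ} (k : Fin (m + 1)) (x : EuclideanSpace ℝ (Fin m)) :
    myLift k x k = 0 := Fin.insertNth_apply_same (α := fun _ => ℝ) k 0 x

lemma myLift_apply_succAbove {m : ℕ} (k : Fin (m + 1)) (x : EuclideanSpace ℝ (Fin m))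
    (j : Fin m) : myLift k x (k.succAbove j) = x j :=
  Fin.insertNth_apply_succAbove (α := fun _ => ℝ) k 0 x j

lemma myLift_inj {m : ℕ} (k : Fin (m + 1)) : Function.Injective (myLift k) := by
  intro x y h
  ext j
  have h2 : myLift k x (k.succAbove j) = myLift k y (k.succAbove j) := by rw [h]
  rwa [myLift_apply_succAbove, myLift_apply_succAbove] at h2

lemma myLift_inner {m : ℕ} (k : Fin (m + 1)) (x y : EuclideanSpace ℝ (Fin m)) :
    ⟪myLift k x, myLift k y⟫ = ⟪x, y⟫ := by
  simp only [PiLp.inner_apply, RCLike.inner_apply, conj_trivial]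
  rw [Fin.sum_univ_succAbove _ k]
  simp [myLift_apply_same, myLift_apply_succAbove]

lemma myLift_quad {m : ℕ} (M : Matrix (Fin (m + 1)) (Fin (m + 1)) ℝ)
    (N : Matrix (Fin m) (Fin m) ℝ) (k : Fin (m + 1))
    (hNM : N = M.submatrix k.succAbove k.succAbove) (y : EuclideanSpace ℝ (Fin m)) :
    ⟪myLift k y, (WithLp.toLp 2 (M *ᵥ myLift k y) : EuclideanSpace ℝ (Fin (m + 1)))⟫
      = ⟪y, (WithLp.toLp 2 (N *ᵥ y) : EuclideanSpace ℝ (Fin m))⟫ := by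
  simp only [PiLp.inner_apply, RCLike.inner_apply, conj_trivial]
  rw [Fin.sum_univ_succAbove _ k]
  rw [myLift_apply_same, mul_zero, zero_add]
  refine Finset.sum_congr rfl fun i _ => ?_
  rw [myLift_apply_succAbove]
  congr 1
  show (M *ᵥ (myLift k y : Fin (m + 1) → ℝ)) (k.succAbove i) = (N *ᵥ (y : Fin m → ℝ)) i
  rw [Matrix.mulVec, Matrix.mulVec, dotProduct, dotProduct]
  rw [Fin.sum_univ_succAbove _ k]
  rw [show (myLift k y : Fin (m + 1) → ℝ) k = 0 from myLift_apply_same k y, mul_zero, zero_add]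
  refine Finset.sum_congr rfl fun l _ => ?_
  rw [show (myLift k y : Fin (m + 1) → ℝ) (k.succAbove l) = y l from myLift_apply_succAbove k y l,
    hNM, Matrix.submatrix_apply]
lemma my_rayleigh {m : ℕ} {ι : Type} [Fintype ι] (P : Matrix (Fin m) (Fin m) ℝ)
    (v : ι → EuclideanSpace ℝ (Fin m)) (hv : Orthonormal ℝ v) (g : ι → ℝ)
    (hvg : ∀ j, (WithLp.toLp 2 (P *ᵥ v j) : EuclideanSpace ℝ (Fin m)) = g j • v j)
    (c : ι → ℝ) :
    ⟪∑ i, c i • v i, (WithLp.toLp 2 (P *ᵥ WithLp.ofLp (∑ i, c i • v i : EuclideanSpace ℝ (Fin m))) : EuclideanSpace ℝ (Fin m))⟫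
        = ∑ i, g i * (c i * c i)
      ∧ ⟪(∑ i, c i • v i : EuclideanSpace ℝ (Fin m)), ∑ i, c i • v i⟫ = ∑ i, c i * c i := by
  have hPx : (WithLp.toLp 2 (P *ᵥ WithLp.ofLp (∑ i, c i • v i : EuclideanSpace ℝ (Fin m))) : EuclideanSpace ℝ (Fin m))
      = ∑ i, (c i * g i) • v i := by
    rw [WithLp.ofLp_sum, Matrix.mulVec_sum, WithLp.toLp_sum]
    refine Finset.sum_congr rfl fun i _ => ?_
    rw [WithLp.ofLp_smul, Matrix.mulVec_smul, WithLp.toLp_smul, hvg, smul_smul]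
  constructor
  · rw [hPx, my_orth_inner v hv]
    exact Finset.sum_congr rfl fun i _ => by ring
  · exact my_orth_inner v hv c c

lemma my_master {m : ℕ} (M : Matrix (Fin (m + 1)) (Fin (m + 1)) ℝ)
    (N : Matrix (Fin m) (Fin m) ℝ) (k : Fin (m + 1))
    (hNM : N = M.submatrix k.succAbove k.succAbove)
    (v : Fin (m + 1) → EuclideanSpace ℝ (Fin (m + 1))) (hv : Orthonormal ℝ v)
    (e : Fin (m + 1) → ℝ)
    (hve : ∀ j, (WithLp.toLp 2 (M *ᵥ v j) : EuclideanSpace ℝ (Fin (m + 1))) = e j • v j)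
    (w : Fin m → EuclideanSpace ℝ (Fin m)) (hw : Orthonormal ℝ w)
    (f : Fin m → ℝ) (hwf : ∀ j, (WithLp.toLp 2 (N *ᵥ w j) : EuclideanSpace ℝ (Fin m)) = f j • w j)
    (a b : ℝ)
    (hcard : m + 2 ≤ (univ.filter fun j => e j ≤ a).card
        + (univ.filter fun j => b ≤ f j).card) :
    b ≤ a := by
  classical
  set sA := univ.filter fun j => e j ≤ a with hsA
  set sB := univ.filter fun j => b ≤ f j with hsB
  set UA : Submodule ℝ (EuclideanSpace ℝ (Fin (m + 1))) :=
    Submodule.span ℝ (Set.range fun i : sA => v i) with hUA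
  set UB : Submodule ℝ (EuclideanSpace ℝ (Fin m)) :=
    Submodule.span ℝ (Set.range fun i : sB => w i) with hUB
  have hUA_rank : Module.finrank ℝ UA = sA.card := by
    exact (finrank_span_eq_card (hv.linearIndependent.comp _ Subtype.val_injective)).trans
      (Fintype.card_coe sA)
  have hUB_rank : Module.finrank ℝ UB = sB.card := by
    exact (finrank_span_eq_card (hw.linearIndependent.comp _ Subtype.val_injective)).trans
      (Fintype.card_coe sB)
  set U : Submodule ℝ (EuclideanSpace ℝ (Fin (m + 1))) := UB.map (myLift k) with hU
  have hU_rank : Module.finrank ℝ U = sB.card := by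
    rw [← hUB_rank]
    exact ((Submodule.equivMapOfInjective _ (myLift_inj k) UB).symm.finrank_eq)
  have htop : Module.finrank ℝ (EuclideanSpace ℝ (Fin (m + 1))) = m + 1 := by
    simp [finrank_euclideanSpace]
  have hne : U ⊓ UA ≠ ⊥ := by
    intro hbot
    have h1 := Submodule.finrank_sup_add_finrank_inf_eq U UA
    rw [hbot] at h1
    have h2 : Module.finrank ℝ (U ⊔ UA : Submodule ℝ (EuclideanSpace ℝ (Fin (m + 1)))) ≤ m + 1 :=
      le_trans (Submodule.finrank_le _) (le_of_eq htop)
    rw [hU_rank, hUA_rank] at h1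
    simp [finrank_bot] at h1
    omega
  obtain ⟨x, hx, hx0⟩ := Submodule.exists_mem_ne_zero_of_ne_bot hne
  obtain ⟨hxU, hxA⟩ := Submodule.mem_inf.mp hx
  obtain ⟨y, hyB, rfl⟩ := Submodule.mem_map.mp hxU
  have hy0 : y ≠ 0 := by
    intro h
    exact hx0 (by rw [h, map_zero])
  -- coefficients for x in UA
  obtain ⟨c, hc⟩ := (Submodule.mem_span_range_iff_exists_fun ℝ).mp hxA
  obtain ⟨d, hd⟩ := (Submodule.mem_span_range_iff_exists_fun ℝ).mp hyB
  have hvA : Orthonormal ℝ (fun i : sA => v i) := hv.comp _ Subtype.val_injective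
  have hwB : Orthonormal ℝ (fun i : sB => w i) := hw.comp _ Subtype.val_injective
  obtain ⟨hq1, hq2⟩ := my_rayleigh M (fun i : sA => v i) hvA (fun i => e i)
    (fun j => hve j) c
  obtain ⟨hr1, hr2⟩ := my_rayleigh N (fun i : sB => w i) hwB (fun i => f i)
    (fun j => hwf j) d
  rw [hc] at hq1 hq2
  rw [hd] at hr1 hr2
  -- inner products
  have hyy : ⟪y, y⟫ = ∑ i, d i * d i := hr2
  have hyy_pos : (0:ℝ) < ⟪y, y⟫ := by
    rw [real_inner_self_eq_norm_mul_norm]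
    have h0 : (0:ℝ) < ‖y‖ := norm_pos_iff.mpr hy0
    exact mul_pos h0 h0
  have hquad : ⟪y, (WithLp.toLp 2 (N *ᵥ y) : EuclideanSpace ℝ (Fin m))⟫
      = ⟪myLift k y, (WithLp.toLp 2 (M *ᵥ myLift k y) : EuclideanSpace ℝ (Fin (m + 1)))⟫ :=
    (myLift_quad M N k hNM y).symm
  have hnorm : ⟪myLift k y, myLift k y⟫ = ⟪y, y⟫ := myLift_inner k y y
  -- bounds
  have hub : ⟪myLift k y, (WithLp.toLp 2 (M *ᵥ myLift k y) : EuclideanSpace ℝ (Fin (m + 1)))⟫ ≤ a * ⟪y, y⟫ := by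
    rw [hq1, ← hnorm, hq2]
    rw [Finset.mul_sum]
    refine Finset.sum_le_sum fun i _ => ?_
    have hia : e i ≤ a := (Finset.mem_filter.mp i.2).2
    nlinarith [mul_self_nonneg (c i)]
  have hlb : b * ⟪y, y⟫ ≤ ⟪y, (WithLp.toLp 2 (N *ᵥ y) : EuclideanSpace ℝ (Fin m))⟫ := by
    rw [hr1, hyy, Finset.mul_sum]
    refine Finset.sum_le_sum fun i _ => ?_
    have hib : b ≤ f i := (Finset.mem_filter.mp i.2).2
    nlinarith [mul_self_nonneg (d i)]
  have : b * ⟪y, y⟫ ≤ a * ⟪y, y⟫ := le_trans hlb (by rw [hquad]; exact hub)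
  exact le_of_mul_le_mul_right (by simpa [mul_comm] using this) hyy_pos

open Polynomial in
theorem stmt_2 (n : ℕ) (A : Matrix (Fin (n + 1)) (Fin (n + 1)) ℝ) (hA : A.IsSymm)
    (k : Fin (n + 1)) (B : Matrix (Fin n) (Fin n) ℝ)
    (hB : B = A.submatrix k.succAbove k.succAbove)
    (μ : Fin (n + 1) → ℝ) (σ : Fin n → ℝ) (hμ : Antitone μ) (hσ : Antitone σ)
    (hμA : A.charpoly = ∏ i, (X - C (μ i)))
    (hσB : B.charpoly = ∏ i, (X - C (σ i))) :
    ∀ i : Fin n, σ i ≤ μ i.castSucc ∧ μ i.succ ≤ σ i := by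
  classical
  have hAh : A.IsHermitian := by
    rw [Matrix.IsHermitian]
    ext i j
    rw [Matrix.conjTranspose_apply, star_trivial]
    exact congrFun (congrFun hA i) j
  have hBh : B.IsHermitian := by
    rw [Matrix.IsHermitian]
    ext i j
    rw [Matrix.conjTranspose_apply, star_trivial, hB, Matrix.submatrix_apply,
      Matrix.submatrix_apply]
    exact congrFun (congrFun hA (k.succAbove i)) (k.succAbove j)
  have msA : Finset.univ.val.map hAh.eigenvalues = Finset.univ.val.map μ :=
    my_ms_eq _ _ ((my_charpoly_eq A hAh).symm.trans hμA)
  have msB : Finset.univ.val.map hBh.eigenvalues = Finset.univ.val.map σ :=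
    my_ms_eq _ _ ((my_charpoly_eq B hBh).symm.trans hσB)
  have hve : ∀ j, (WithLp.toLp 2 (A *ᵥ (hAh.eigenvectorBasis j)) :
      EuclideanSpace ℝ (Fin (n + 1))) = hAh.eigenvalues j • (hAh.eigenvectorBasis j) :=
    fun j => congrArg (WithLp.toLp 2) (hAh.mulVec_eigenvectorBasis j)
  have hwf : ∀ j, (WithLp.toLp 2 (B *ᵥ (hBh.eigenvectorBasis j)) :
      EuclideanSpace ℝ (Fin n)) = hBh.eigenvalues j • (hBh.eigenvectorBasis j) :=
    fun j => congrArg (WithLp.toLp 2) (hBh.mulVec_eigenvectorBasis j)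
  intro i
  constructor
  · -- σ i ≤ μ i.castSucc
    refine my_master A B k hB _ hAh.eigenvectorBasis.orthonormal hAh.eigenvalues hve
      _ hBh.eigenvectorBasis.orthonormal hBh.eigenvalues hwf (μ i.castSucc) (σ i) ?_
    have hA1 : (Finset.univ.filter fun j => hAh.eigenvalues j ≤ μ i.castSucc).card
        = (Finset.univ.filter fun j => μ j ≤ μ i.castSucc).card :=
      my_count_eq _ _ msA (fun x => x ≤ μ i.castSucc)
    have hB1 : (Finset.univ.filter fun j => σ i ≤ hBh.eigenvalues j).card
        = (Finset.univ.filter fun j => σ i ≤ σ j).card :=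
      my_count_eq _ _ msB (fun x => σ i ≤ x)
    have hA2 : Finset.Ici i.castSucc ⊆ Finset.univ.filter fun j => μ j ≤ μ i.castSucc := by
      intro j hj
      exact Finset.mem_filter.mpr ⟨Finset.mem_univ _, hμ (Finset.mem_Ici.mp hj)⟩
    have hB2 : Finset.Iic i ⊆ Finset.univ.filter fun j => σ i ≤ σ j := by
      intro j hj
      exact Finset.mem_filter.mpr ⟨Finset.mem_univ _, hσ (Finset.mem_Iic.mp hj)⟩
    have hA3 := Finset.card_le_card hA2
    have hB3 := Finset.card_le_card hB2
    rw [Fin.card_Ici] at hA3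
    rw [Fin.card_Iic] at hB3
    rw [Fin.coe_castSucc] at hA3
    have hi := i.isLt
    omega
  · -- μ i.succ ≤ σ i
    have key : -σ i ≤ -μ i.succ := by
      refine my_master (-A) (-B) k ?_ _ hAh.eigenvectorBasis.orthonormal
        (fun j => -hAh.eigenvalues j) ?_
        _ hBh.eigenvectorBasis.orthonormal (fun j => -hBh.eigenvalues j) ?_
        (-μ i.succ) (-σ i) ?_
      · rw [hB]
        ext p q
        simp
      · intro j
        show WithLp.toLp 2 ((-A) *ᵥ _) = _
        rw [Matrix.neg_mulVec]
        show -(WithLp.toLp 2 (A *ᵥ (hAh.eigenvectorBasis j)) : EuclideanSpace ℝ (Fin (n + 1))) = _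
        rw [hve j, ← neg_smul]
      · intro j
        show WithLp.toLp 2 ((-B) *ᵥ _) = _
        rw [Matrix.neg_mulVec]
        show -(WithLp.toLp 2 (B *ᵥ (hBh.eigenvectorBasis j)) : EuclideanSpace ℝ (Fin n)) = _
        rw [hwf j, ← neg_smul]
      · have hA1 : (Finset.univ.filter fun j => -hAh.eigenvalues j ≤ -μ i.succ).card
            = (Finset.univ.filter fun j => -μ j ≤ -μ i.succ).card :=
          my_count_eq _ _ msA (fun x => -x ≤ -μ i.succ)
        have hB1 : (Finset.univ.filter fun j => -σ i ≤ -hBh.eigenvalues j).card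
            = (Finset.univ.filter fun j => -σ i ≤ -σ j).card :=
          my_count_eq _ _ msB (fun x => -σ i ≤ -x)
        have hA2 : Finset.Iic i.succ ⊆ Finset.univ.filter fun j => -μ j ≤ -μ i.succ := by
          intro j hj
          exact Finset.mem_filter.mpr ⟨Finset.mem_univ _,
            neg_le_neg (hμ (Finset.mem_Iic.mp hj))⟩
        have hB2 : Finset.Ici i ⊆ Finset.univ.filter fun j => -σ i ≤ -σ j := by
          intro j hj
          exact Finset.mem_filter.mpr ⟨Finset.mem_univ _,
            neg_le_neg (hσ (Finset.mem_Ici.mp hj))⟩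
        have hA3 := Finset.card_le_card hA2
        have hB3 := Finset.card_le_card hB2
        rw [Fin.card_Iic] at hA3
        rw [Fin.card_Ici] at hB3
        rw [Fin.val_succ] at hA3
        have hi := i.isLt
        beta_reduce
        rw [hA1, hB1]
        omega
    linarith
end

section
/- Let A be a real symmetric n×n matrix and B a principal submatrix of size (n-1)×(n-1). If A has η distinct eigenvalues, then B has at least ⌈η/2⌉ - 1 distinct eigenvalues; in particular, deleting one row/column can at most roughly halve the number of distinct eigenvalues. -/
open Matrix in
/-- If the quadratic form `⟨(B-λ)(B-μ)x, x⟩` is nonpositive at some nonzero `x`, then the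
symmetric matrix `B` has an eigenvalue in `[λ, μ]`. -/
lemma key_quadratic {m : ℕ} {B : Matrix (Fin m) (Fin m) ℝ} (hB : B.IsHermitian)
    {lam mu : ℝ} (hlm : lam < mu) {x : Fin m → ℝ} (hx : x ≠ 0)
    (hq : (B *ᵥ x) ⬝ᵥ (B *ᵥ x) - (lam + mu) * ((B *ᵥ x) ⬝ᵥ x) + lam * mu * (x ⬝ᵥ x) ≤ 0) :
    ∃ t ∈ spectrum ℝ B, lam ≤ t ∧ t ≤ mu := by
  by_contra hcon
  push_neg at hcon
  set U : Matrix (Fin m) (Fin m) ℝ := (hB.eigenvectorUnitary : Matrix (Fin m) (Fin m) ℝ) with hUdef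
  set d : Fin m → ℝ := hB.eigenvalues with hddef
  have hU1 : star U * U = 1 := Unitary.star_mul_self_of_mem hB.eigenvectorUnitary.2
  have hU2 : U * star U = 1 := Unitary.mul_star_self_of_mem hB.eigenvectorUnitary.2
  have hstarU : star U = Uᵀ := by
    rw [Matrix.star_eq_conjTranspose, Matrix.conjTranspose_eq_transpose_of_trivial]
  set c : Fin m → ℝ := star U *ᵥ x with hcdef
  have hxc : x = U *ᵥ c := by rw [hcdef, Matrix.mulVec_mulVec, hU2, Matrix.one_mulVec]
  have hc0 : c ≠ 0 := by
    intro h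
    apply hx
    rw [hxc, h, Matrix.mulVec_zero]
  have hdot : ∀ a b : Fin m → ℝ, (U *ᵥ a) ⬝ᵥ (U *ᵥ b) = a ⬝ᵥ b := by
    intro a b
    rw [Matrix.dotProduct_mulVec, Matrix.vecMul_mulVec, ← hstarU, hU1, Matrix.vecMul_one]
  have hBspec : B = U * Matrix.diagonal d * star U := by
    simpa using hB.spectral_theorem
  have hBx : B *ᵥ x = U *ᵥ (Matrix.diagonal d *ᵥ c) := by
    rw [hBspec, hcdef, ← Matrix.mulVec_mulVec, ← Matrix.mulVec_mulVec]
  have hdc : ∀ i, (Matrix.diagonal d *ᵥ c) i = d i * c i := by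
    intro i; rw [Matrix.mulVec_diagonal]
  -- rewrite the quadratic form as a sum over eigenvalues
  have hsum : (B *ᵥ x) ⬝ᵥ (B *ᵥ x) - (lam + mu) * ((B *ᵥ x) ⬝ᵥ x) + lam * mu * (x ⬝ᵥ x)
      = ∑ i, (c i) ^ 2 * ((d i - lam) * (d i - mu)) := by
    rw [hBx, hxc, hdot, hdot, hdot, dotProduct, dotProduct, dotProduct,
      Finset.mul_sum, Finset.mul_sum, ← Finset.sum_sub_distrib, ← Finset.sum_add_distrib]
    refine Finset.sum_congr rfl fun i _ => ?_
    rw [hdc]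
    ring
  have hpos : ∀ i, 0 < (d i - lam) * (d i - mu) := by
    intro i
    have hmem : d i ∈ spectrum ℝ B := hB.eigenvalues_mem_spectrum_real i
    rcases lt_or_ge (d i) lam with h | h
    · have : d i - lam < 0 := by linarith
      have h2 : d i - mu < 0 := by linarith
      exact mul_pos_of_neg_of_neg this h2
    · have := hcon _ hmem h
      have h1 : 0 < d i - lam := by linarith
      have h2 : 0 < d i - mu := by linarith
      exact mul_pos h1 h2
  obtain ⟨i0, hi0⟩ := Function.ne_iff.mp hc0
  have hlt : 0 < ∑ i, (c i) ^ 2 * ((d i - lam) * (d i - mu)) := by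
    refine Finset.sum_pos' (fun i _ => mul_nonneg (sq_nonneg _) (hpos i).le) ⟨i0, Finset.mem_univ _, ?_⟩
    exact mul_pos (lt_of_le_of_ne (sq_nonneg _) (Ne.symm (pow_ne_zero 2 hi0))) (hpos i0)
  rw [hsum] at hq
  linarith

open Matrix in
/-- Between any two eigenvalues of a real symmetric matrix there is an eigenvalue of any
principal submatrix obtained by deleting one row and column. -/
lemma exists_eigenvalue_between {n : ℕ} {A : Matrix (Fin (n + 1)) (Fin (n + 1)) ℝ}
    (hA : A.IsSymm) (k : Fin (n + 1)) {lam mu : ℝ} (hlam : lam ∈ spectrum ℝ A)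
    (hmu : mu ∈ spectrum ℝ A) (hlt : lam < mu) :
    ∃ t ∈ spectrum ℝ (A.submatrix k.succAbove k.succAbove), lam ≤ t ∧ t ≤ mu := by
  have hH : A.IsHermitian := by
    rw [Matrix.IsHermitian, Matrix.conjTranspose_eq_transpose_of_trivial]
    exact hA
  set B := A.submatrix k.succAbove k.succAbove with hBdef
  have hBH : B.IsHermitian := by
    rw [Matrix.IsHermitian, Matrix.conjTranspose_eq_transpose_of_trivial, hBdef,
      Matrix.transpose_submatrix, hA]
  -- eigenvectors for lam and mu
  rw [hH.spectrum_real_eq_range_eigenvalues] at hlam hmu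
  obtain ⟨i, hi⟩ := hlam
  obtain ⟨j, hj⟩ := hmu
  set u : Fin (n + 1) → ℝ := ⇑(hH.eigenvectorBasis i) with hudef
  set v : Fin (n + 1) → ℝ := ⇑(hH.eigenvectorBasis j) with hvdef
  have hu : A *ᵥ u = lam • u := by rw [hudef, hH.mulVec_eigenvectorBasis, hi]
  have hv : A *ᵥ v = mu • v := by rw [hvdef, hH.mulVec_eigenvectorBasis, hj]
  have hune : u ≠ 0 := by
    intro h
    have hz : hH.eigenvectorBasis i = 0 := by ext l; exact congrFun h l
    exact hH.eigenvectorBasis.toBasis.ne_zero i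
      ((congrFun hH.eigenvectorBasis.coe_toBasis i).trans hz)
  have hvne : v ≠ 0 := by
    intro h
    have hz : hH.eigenvectorBasis j = 0 := by ext l; exact congrFun h l
    exact hH.eigenvectorBasis.toBasis.ne_zero j
      ((congrFun hH.eigenvectorBasis.coe_toBasis j).trans hz)
  -- orthogonality
  have huv : u ⬝ᵥ v = 0 := by
    have h1 : (A *ᵥ u) ⬝ᵥ v = lam * (u ⬝ᵥ v) := by rw [hu, smul_dotProduct]; rfl
    have h3 : (A *ᵥ u) ⬝ᵥ v = u ⬝ᵥ (A *ᵥ v) := by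
      rw [← Matrix.vecMul_transpose, ← Matrix.dotProduct_mulVec, hA]
    have h2 : (A *ᵥ u) ⬝ᵥ v = mu * (u ⬝ᵥ v) := by
      rw [h3, hv, dotProduct_smul]; rfl
    have hc : (mu - lam) * (u ⬝ᵥ v) = 0 := by
      rw [sub_mul]; rw [h1] at h2; linarith
    exact (mul_eq_zero.mp hc).resolve_left (sub_ne_zero.mpr hlt.ne')
  have hvu : v ⬝ᵥ u = 0 := by rw [dotProduct_comm]; exact huv
  -- choose coefficients
  obtain ⟨a, b, hab, habne⟩ : ∃ a b : ℝ, a * u k + b * v k = 0 ∧ ¬(a = 0 ∧ b = 0) := by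
    by_cases hk : u k = 0
    · exact ⟨1, 0, by rw [hk]; ring, by simp⟩
    · exact ⟨v k, -u k, by ring, fun h => hk (by simpa using h.2)⟩
  set w : Fin (n + 1) → ℝ := a • u + b • v with hwdef
  have hwk : w k = 0 := by simpa [hwdef] using hab
  have hAw : A *ᵥ w = (a * lam) • u + (b * mu) • v := by
    rw [hwdef, Matrix.mulVec_add, Matrix.mulVec_smul, Matrix.mulVec_smul, hu, hv,
      smul_smul, smul_smul]
  have hwne : w ≠ 0 := by
    intro h
    apply habne
    have hu2 : (0:ℝ) < u ⬝ᵥ u := by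
      have := (Matrix.dotProduct_self_star_pos_iff (v := u)).mpr hune
      simpa using this
    have hv2 : (0:ℝ) < v ⬝ᵥ v := by
      have := (Matrix.dotProduct_self_star_pos_iff (v := v)).mpr hvne
      simpa using this
    constructor
    · have : w ⬝ᵥ u = a * (u ⬝ᵥ u) := by
        rw [hwdef, add_dotProduct, smul_dotProduct, smul_dotProduct, hvu]
        simp
      rw [h, zero_dotProduct] at this
      exact (mul_eq_zero.mp this.symm).resolve_right hu2.ne'
    · have : w ⬝ᵥ v = b * (v ⬝ᵥ v) := by
        rw [hwdef, add_dotProduct, smul_dotProduct, smul_dotProduct, huv]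
        simp
      rw [h, zero_dotProduct] at this
      exact (mul_eq_zero.mp this.symm).resolve_right hv2.ne'
  -- the quadratic form of A at w vanishes
  have hqw : (A *ᵥ w) ⬝ᵥ (A *ᵥ w) - (lam + mu) * ((A *ᵥ w) ⬝ᵥ w) + lam * mu * (w ⬝ᵥ w) = 0 := by
    rw [hAw, hwdef]
    simp only [add_dotProduct, dotProduct_add, smul_dotProduct,
      dotProduct_smul, smul_eq_mul, huv, hvu]
    ring
  -- restrict w to the complement of k
  set x : Fin n → ℝ := fun i => w (k.succAbove i) with hxdef
  have hBx : B *ᵥ x = fun i => (A *ᵥ w) (k.succAbove i) := by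
    funext i
    show ∑ l, A (k.succAbove i) (k.succAbove l) * w (k.succAbove l) = ∑ l, A (k.succAbove i) l * w l
    rw [Fin.sum_univ_succAbove (fun l => A (k.succAbove i) l * w l) k, hwk]
    simp
  have hxx : x ⬝ᵥ x = w ⬝ᵥ w := by
    show ∑ l, w (k.succAbove l) * w (k.succAbove l) = ∑ l, w l * w l
    rw [Fin.sum_univ_succAbove (fun l => w l * w l) k, hwk]
    simp
  have hBxx : (B *ᵥ x) ⬝ᵥ x = (A *ᵥ w) ⬝ᵥ w := by
    rw [hBx]
    show ∑ l, (A *ᵥ w) (k.succAbove l) * w (k.succAbove l) = ∑ l, (A *ᵥ w) l * w l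
    rw [Fin.sum_univ_succAbove (fun l => (A *ᵥ w) l * w l) k, hwk]
    simp
  have hBxBx : (B *ᵥ x) ⬝ᵥ (B *ᵥ x) = (A *ᵥ w) ⬝ᵥ (A *ᵥ w) - ((A *ᵥ w) k) ^ 2 := by
    rw [hBx]
    show ∑ l, (A *ᵥ w) (k.succAbove l) * (A *ᵥ w) (k.succAbove l) = _
    rw [dotProduct, Fin.sum_univ_succAbove (fun l => (A *ᵥ w) l * (A *ᵥ w) l) k]
    ring
  have hxne : x ≠ 0 := by
    obtain ⟨l, hl⟩ := Function.ne_iff.mp hwne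
    have hlk : l ≠ k := by rintro rfl; exact hl hwk
    obtain ⟨i, hi⟩ := Fin.exists_succAbove_eq hlk
    intro h
    apply hl
    have := congrFun h i
    rw [hxdef] at this
    simpa [hi] using this
  refine key_quadratic hBH hlt hxne ?_
  rw [hBxBx, hxx, hBxx]
  nlinarith [sq_nonneg ((A *ᵥ w) k), hqw]

theorem stmt_7 (n : ℕ) (A : Matrix (Fin (n + 1)) (Fin (n + 1)) ℝ) (hA : A.IsSymm)
    (k : Fin (n + 1)) (η : ℕ) (hη : (spectrum ℝ A).ncard = η) :
    (η + 1) / 2 - 1 ≤ (spectrum ℝ (A.submatrix k.succAbove k.succAbove)).ncard := by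
  classical
  set B := A.submatrix k.succAbove k.succAbove with hBdef
  have hS : (spectrum ℝ A).Finite := A.finite_real_spectrum
  have hT : (spectrum ℝ B).Finite := B.finite_real_spectrum
  set m := (η + 1) / 2 - 1 with hmdef
  have hcard : hS.toFinset.card = η := by
    rw [← Set.ncard_eq_toFinset_card _ hS]
    exact hη
  set e := hS.toFinset.orderEmbOfFin hcard with hedef
  have hmem : ∀ i : Fin η, (e i : ℝ) ∈ spectrum ℝ A := fun i => by
    have := hS.toFinset.orderEmbOfFin_mem hcard i
    rwa [Set.Finite.mem_toFinset] at this
  have h2i : ∀ i : Fin m, 2 * (i : ℕ) + 1 < η := fun i => by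
    have := i.isLt
    omega
  have h2i' : ∀ i : Fin m, 2 * (i : ℕ) < η := fun i => by
    have := h2i i
    omega
  have hkey : ∀ i : Fin m, ∃ t ∈ spectrum ℝ B,
      (e ⟨2 * i, h2i' i⟩ : ℝ) ≤ t ∧ t ≤ e ⟨2 * i + 1, h2i i⟩ := by
    intro i
    refine exists_eigenvalue_between hA k (hmem _) (hmem _) ?_
    exact e.strictMono (by simp [Fin.lt_def])
  choose t ht1 ht2 ht3 using hkey
  have hsm : StrictMono t := by
    intro i j hij
    calc t i ≤ e ⟨2 * i + 1, h2i i⟩ := ht3 i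
      _ < e ⟨2 * j, h2i' j⟩ := e.strictMono (by simp [Fin.lt_def]; omega)
      _ ≤ t j := ht2 j
  have himage : (Finset.univ.image t) ⊆ hT.toFinset := by
    intro y hy
    obtain ⟨i, _, rfl⟩ := Finset.mem_image.mp hy
    rw [Set.Finite.mem_toFinset]
    exact ht1 i
  calc m = (Finset.univ.image t).card := by
        rw [Finset.card_image_of_injective _ hsm.injective, Finset.card_univ, Fintype.card_fin]
    _ ≤ hT.toFinset.card := Finset.card_le_card himage
    _ = (spectrum ℝ B).ncard := (Set.ncard_eq_toFinset_card _ hT).symm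
end

section
/- Let G be a disjoint union of cliques of sizes s_1, ..., s_t. The minimum number of vertex deletions turning G into a disjoint union of equal-sized cliques equals ∑_{i=1}^t s_i − max_{1 ≤ j ≤ t} ( s_j · |{i : s_i ≥ s_j}| ). -/
theorem stmt_10 {V : Type*} [Fintype V] [DecidableEq V] (G : SimpleGraph V)
    (t : ℕ) (s : Fin t → ℕ) (f : V → Fin t)
    (hadj : ∀ u v : V, u ≠ v → (G.Adj u v ↔ f u = f v))
    (hsize : ∀ i, (Finset.univ.filter (fun v => f v = i)).card = s i)
    (hpos : ∀ i, 1 ≤ s i) :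
    IsLeast {k : ℕ | ∃ S : Finset V, S.card = k ∧
        ∃ x : ℕ, ∀ v ∉ S, (Finset.univ.filter (fun u => u ∉ S ∧ f u = f v)).card = x}
      ((∑ i, s i) -
        Finset.univ.sup (fun j => s j * (Finset.univ.filter (fun i => s j ≤ s i)).card)) := by
  classical
  set M := Finset.univ.sup (fun j => s j * (Finset.univ.filter (fun i => s j ≤ s i)).card)
    with hM
  have hcardV : Fintype.card V = ∑ i, s i := by
    rw [← Finset.card_univ,
      Finset.card_eq_sum_card_fiberwise (f := f) (t := Finset.univ)
        (fun x _ => Finset.mem_univ _)]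
    simp [hsize]
  constructor
  · -- membership
    rcases Nat.eq_zero_or_pos t with ht | ht
    · subst ht
      refine ⟨∅, ?_, 0, fun v _ => (f v).elim0⟩
      simp [hM]
    · have hne : (Finset.univ : Finset (Fin t)).Nonempty := ⟨⟨0, ht⟩, Finset.mem_univ _⟩
      obtain ⟨j₀, -, hj₀⟩ := Finset.exists_mem_eq_sup Finset.univ hne
        (fun j => s j * (Finset.univ.filter (fun i => s j ≤ s i)).card)
      have hch : ∀ i : Fin t, ∃ u, u ⊆ Finset.univ.filter (fun v => f v = i) ∧
          u.card = (if s j₀ ≤ s i then s j₀ else 0) := by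
        intro i
        by_cases h : s j₀ ≤ s i
        · obtain ⟨u, hu1, hu2⟩ := Finset.exists_subset_card_eq
            (s := Finset.univ.filter (fun v => f v = i)) (n := s j₀) (by rw [hsize]; exact h)
          exact ⟨u, hu1, by simp [h, hu2]⟩
        · exact ⟨∅, by simp, by simp [h]⟩
      choose ch hch1 hch2 using hch
      have hchf : ∀ i, ∀ v ∈ ch i, f v = i := by
        intro i v hv
        have := hch1 i hv
        simpa using (Finset.mem_filter.mp this).2
      set K : Finset V := Finset.univ.biUnion ch with hK
      have hKcard : K.card = s j₀ * (Finset.univ.filter (fun i => s j₀ ≤ s i)).card := by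
        rw [hK, Finset.card_biUnion]
        · rw [Finset.sum_congr rfl (fun i _ => hch2 i), ← Finset.sum_filter,
            Finset.sum_const, smul_eq_mul, mul_comm]
        · intro i _ j _ hij
          refine Finset.disjoint_left.mpr fun v hvi hvj => ?_
          exact hij ((hchf i v hvi) ▸ (hchf j v hvj) ▸ rfl)
      refine ⟨Finset.univ \ K, ?_, s j₀, ?_⟩
      · rw [Finset.card_sdiff_of_subset (Finset.subset_univ K), Finset.card_univ, hcardV, hKcard, ← hj₀]
      · intro v hv
        have hvK : v ∈ K := by
          by_contra h
          exact hv (Finset.mem_sdiff.mpr ⟨Finset.mem_univ v, h⟩)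
        obtain ⟨i₀, -, hvi₀⟩ := Finset.mem_biUnion.mp hvK
        have hfv : f v = i₀ := hchf i₀ v hvi₀
        have hfilter : Finset.univ.filter (fun u => u ∉ Finset.univ \ K ∧ f u = f v)
            = ch (f v) := by
          ext u
          simp only [Finset.mem_filter, Finset.mem_univ, Finset.mem_sdiff, true_and,
            not_and, not_not]
          constructor
          · rintro ⟨hu1, hu2⟩
            obtain ⟨i, -, hui⟩ := Finset.mem_biUnion.mp (by rwa [hK] at hu1)
            rwa [← hu2, hchf i u hui]
          · intro hu
            refine ⟨?_, hchf (f v) u hu⟩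
            rw [hK]
            exact Finset.mem_biUnion.mpr ⟨f v, Finset.mem_univ _, hu⟩
        rw [hfilter, hch2]
        have hgood : s j₀ ≤ s (f v) := by
          by_contra h
          have h2 := hch2 i₀
          rw [if_neg (hfv ▸ h)] at h2
          exact absurd (Finset.card_eq_zero.mp h2 ▸ hvi₀) (Finset.notMem_empty v)
        rw [if_pos hgood]
  · -- lower bound
    rintro k ⟨S, rfl, x, hx⟩
    set K : Finset V := Finset.univ \ S with hK
    have hSle : S.card ≤ ∑ i, s i := hcardV ▸ Finset.card_le_univ S
    have hKcard0 : K.card = ∑ i, s i - S.card := by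
      rw [hK, Finset.card_sdiff_of_subset (Finset.subset_univ S), Finset.card_univ, hcardV]
    suffices hKM : K.card ≤ M by omega
    have hfiber : ∀ v ∈ K, (K.filter (fun u => f u = f v)).card = x := by
      intro v hv
      have hvS : v ∉ S := (Finset.mem_sdiff.mp hv).2
      rw [← hx v hvS]
      congr 1
      ext u
      simp only [Finset.mem_filter, hK, Finset.mem_sdiff, Finset.mem_univ, true_and,
        and_assoc]
    by_cases hKe : K = ∅
    · simp [hKe]
    obtain ⟨v₀, hv₀⟩ := Finset.nonempty_iff_ne_empty.mpr hKe
    set r : Fin t → ℕ := fun i => (K.filter (fun v => f v = i)).card with hr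
    have hrK : K.card = ∑ i, r i :=
      Finset.card_eq_sum_card_fiberwise (fun v _ => Finset.mem_univ _)
    set T := Finset.univ.filter (fun i => r i ≠ 0) with hT
    have hrT : ∀ i ∈ T, r i = x := by
      intro i hi
      have hne : (K.filter (fun v => f v = i)).Nonempty := by
        rw [Finset.nonempty_iff_ne_empty]
        intro h
        exact (Finset.mem_filter.mp hi).2 (by rw [hr]; simp [h])
      obtain ⟨v, hv⟩ := hne
      obtain ⟨hvK, hfv⟩ := Finset.mem_filter.mp hv
      rw [hr]
      rw [← hfv]
      exact hfiber v hvK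
    have hrx : K.card = T.card * x := by
      rw [hrK, ← Finset.sum_filter_ne_zero Finset.univ (f := r), ← hT,
        Finset.sum_congr rfl hrT, Finset.sum_const, smul_eq_mul]
    have hTne : T.Nonempty := by
      refine ⟨f v₀, Finset.mem_filter.mpr ⟨Finset.mem_univ _, ?_⟩⟩
      rw [hr]
      simp only [ne_eq, Finset.card_eq_zero, ← Finset.not_nonempty_iff_eq_empty, not_not]
      exact ⟨v₀, Finset.mem_filter.mpr ⟨hv₀, rfl⟩⟩
    obtain ⟨j, hjT, hjmin⟩ := T.exists_min_image s hTne
    have hxj : x ≤ s j := by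
      rw [← hrT j hjT, hr, ← hsize j]
      exact Finset.card_le_card (Finset.filter_subset_filter _ (Finset.subset_univ K))
    have hTsub : T ⊆ Finset.univ.filter (fun i => s j ≤ s i) := by
      intro i hi
      exact Finset.mem_filter.mpr ⟨Finset.mem_univ _, hjmin i hi⟩
    calc K.card = T.card * x := hrx
      _ ≤ (Finset.univ.filter (fun i => s j ≤ s i)).card * s j :=
          Nat.mul_le_mul (Finset.card_le_card hTsub) hxj
      _ = s j * (Finset.univ.filter (fun i => s j ≤ s i)).card := mul_comm _ _
      _ ≤ M := by rw [hM]; exact Finset.le_sup (f := fun j => s j * (Finset.univ.filter (fun i => s j ≤ s i)).card) (Finset.mem_univ j)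
end

section
/- Let G be a disjoint union of cliques containing t cliques of size p (p ≥ 1), together with possibly other cliques of size larger than p. Suppose F is a set of non-edges of G such that adding F to G yields a disjoint union of equal-sized cliques. Then |F| ≥ t·p/2. -/
theorem stmt_17 {V ι : Type*} [Fintype V] [DecidableEq V] [Fintype ι] [DecidableEq ι]
    (G : SimpleGraph V) (f : V → ι) (t p : ℕ) (hp : 1 ≤ p)
    (hadj : ∀ u v : V, u ≠ v → (G.Adj u v ↔ f u = f v))
    (P : Finset ι) (htP : P.card = t)
    (hPsize : ∀ i ∈ P, (Finset.univ.filter (fun v => f v = i)).card = p)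
    (hbig : ∀ i ∉ P, (Finset.univ.filter (fun v => f v = i)).card = 0 ∨
      p < (Finset.univ.filter (fun v => f v = i)).card)
    (hex : ∃ i, p < (Finset.univ.filter (fun v => f v = i)).card)
    (F : Finset (Sym2 V)) (hF : ∀ e ∈ F, e ∉ G.edgeSet)
    (hres : (∀ u v : V, u ≠ v → (G ⊔ SimpleGraph.fromEdgeSet ↑F).Reachable u v →
        (G ⊔ SimpleGraph.fromEdgeSet ↑F).Adj u v) ∧
      ∃ x : ℕ, ∀ v : V,
        {u : V | (G ⊔ SimpleGraph.fromEdgeSet ↑F).Reachable v u}.ncard = x) :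
    (t * p : ℝ) / 2 ≤ F.card := by
  classical
  obtain ⟨hclq, x, hx⟩ := hres
  set H := G ⊔ SimpleGraph.fromEdgeSet ↑F with hH
  have hfib : ∀ w : V, {u : V | f u = f w}.ncard
      = (Finset.univ.filter (fun v => f v = f w)).card := by
    intro w
    rw [Set.ncard_eq_toFinset_card']
    congr 1
    ext u; simp
  -- x > p
  obtain ⟨i, hi⟩ := hex
  obtain ⟨w, hw⟩ : (Finset.univ.filter (fun v => f v = i)).Nonempty :=
    Finset.card_pos.mp (lt_of_le_of_lt (Nat.zero_le _) hi)
  have hfw : f w = i := by simpa using hw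
  have hsub : {u : V | f u = f w} ⊆ {u : V | H.Reachable w u} := by
    intro u hu
    simp only [Set.mem_setOf_eq] at hu ⊢
    by_cases huw : u = w
    · subst huw; exact SimpleGraph.Reachable.refl _
    · have : H.Adj w u := Or.inl ((hadj w u (Ne.symm huw)).mpr hu.symm)
      exact this.reachable
  have hxp : p < x := by
    have h1 := hx w
    have h2 : {u : V | f u = f w}.ncard ≤ {u : V | H.Reachable w u}.ncard :=
      Set.ncard_le_ncard hsub (Set.toFinite _)
    rw [hfib, hfw, h1] at h2
    exact lt_of_lt_of_le hi h2
  -- every vertex in a P-fiber meets some edge of F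
  have key : ∀ v : V, f v ∈ P → ∃ e ∈ F, v ∈ e := by
    intro v hv
    by_contra hcon
    push_neg at hcon
    have hreach : {u : V | H.Reachable v u} = {u : V | f u = f v} := by
      ext u
      simp only [Set.mem_setOf_eq]
      constructor
      · intro hr
        by_cases huv : u = v
        · subst huv; rfl
        · rcases hclq v u (Ne.symm huv) hr with hG | hF'
          · exact ((hadj v u (Ne.symm huv)).mp hG).symm
          · have : s(v, u) ∈ F := by
              simpa using hF'.1
            exact absurd (Sym2.mem_mk_left v u) (hcon _ this)
      · intro hu
        by_cases huv : u = v
        · subst huv; exact SimpleGraph.Reachable.refl _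
        · have : H.Adj v u := Or.inl ((hadj v u (Ne.symm huv)).mpr hu.symm)
          exact this.reachable
    have h1 := hx v
    rw [hreach, hfib, hPsize _ hv] at h1
    omega
  -- counting
  set S := Finset.univ.filter (fun v => f v ∈ P) with hS
  have hScard : S.card = t * p := by
    have hSeq : S = P.biUnion (fun i => Finset.univ.filter (fun v => f v = i)) := by
      ext v
      simp [hS]
    rw [hSeq, Finset.card_biUnion]
    · rw [Finset.sum_congr rfl hPsize, Finset.sum_const, smul_eq_mul, htP]
    · intro a _ b _ hab
      rw [Function.onFun, Finset.disjoint_left]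
      intro v hv1 hv2
      simp only [Finset.mem_filter] at hv1 hv2
      exact hab (hv1.2 ▸ hv2.2)
  have hg : ∀ v : V, ∃ e : Sym2 V, v ∈ S → e ∈ F ∧ v ∈ e := by
    intro v
    by_cases hv : v ∈ S
    · have hv' : f v ∈ P := by simpa [hS] using hv
      obtain ⟨e, he, hve⟩ := key v hv'
      exact ⟨e, fun _ => ⟨he, hve⟩⟩
    · exact ⟨s(v, v), fun h => absurd h hv⟩
  choose g hgspec using hg
  have hcount : S.card ≤ 2 * F.card := by
    apply Finset.card_le_mul_card_image_of_maps_to (f := g)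
      (fun v hv => (hgspec v hv).1)
    intro e he
    induction e using Sym2.ind with
    | _ a b =>
      have hsub2 : (S.filter (fun v => g v = s(a, b))) ⊆ {a, b} := by
        intro v hv
        simp only [Finset.mem_filter] at hv
        have hve : v ∈ s(a, b) := hv.2 ▸ (hgspec v hv.1).2
        rcases Sym2.mem_iff.mp hve with h | h <;> simp [h]
      calc (S.filter (fun v => g v = s(a, b))).card ≤ ({a, b} : Finset V).card :=
            Finset.card_le_card hsub2
        _ ≤ 2 := (Finset.card_insert_le _ _).trans (by simp)
  rw [div_le_iff₀ (by norm_num : (0:ℝ) < 2)]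
  have h1 : (t * p : ℕ) ≤ 2 * F.card := hScard ▸ hcount
  have h2 : ((t * p : ℕ) : ℝ) ≤ ((2 * F.card : ℕ) : ℝ) := by exact_mod_cast h1
  push_cast at h2
  linarith
end
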